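/- For every real μ with γ < μ ≤ 0 and every real t ≥ 0, the operator norm of exp(tA) satisfies ‖exp(tA)‖ ≤ ‖L(μ)‖ · ‖L(μ)^{-1}‖ · e^{μt}, where L(μ) = [[K^{1/2}K(μ)^{-1/2}, 0], [μ M^{1/2}K(μ)^{-1/2}, I]]. -/

import Mathlib

open Matrix
open scoped ComplexOrder

noncomputable section

/-- The value `x* P x` (which is real for Hermitian `P`), taken as its real part. -/
def qf {n : ℕ} (P : Matrix (Fin n) (Fin n) ℂ) (x : Fin n → ℂ) : ℝ :=
  (star x ⬝ᵥ P.mulVec x).re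

/-- The (positive semidefinite) square root of a positive semidefinite matrix,
extended by `0` to all matrices. -/
def msqrt {n : ℕ} (P : Matrix (Fin n) (Fin n) ℂ) : Matrix (Fin n) (Fin n) ℂ :=
  open scoped Classical in
  if h : P.PosSemidef then
    h.1.eigenvectorUnitary.1 * diagonal ((↑) ∘ (√·) ∘ h.1.eigenvalues) *
      (star h.1.eigenvectorUnitary : Matrix (Fin n) (Fin n) ℂ)
  else 0

/-- The quadratic matrix pencil `K(λ) = λ²M + λC + K`. -/
def Kpen {n : ℕ} (M C K : Matrix (Fin n) (Fin n) ℂ) (lam : ℂ) :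
    Matrix (Fin n) (Fin n) ℂ :=
  lam ^ 2 • M + lam • C + K

/-- The real part of the `+`-root of the scalar quadratic
`m(x) λ² + c(x) λ + k(x) = 0`. -/
def rfun {n : ℕ} (M C K : Matrix (Fin n) (Fin n) ℂ) (x : Fin n → ℂ) : ℝ :=
  open scoped Classical in
  if (qf C x) ^ 2 ≥ 4 * qf M x * qf K x then
    (-(qf C x) + Real.sqrt ((qf C x) ^ 2 - 4 * qf M x * qf K x)) / (2 * qf M x)
  else
    -(qf C x) / (2 * qf M x)

/-- The spectral-shift bound `γ = sup_{x ≠ 0} Re p₊(x)`. -/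
def gam {n : ℕ} (M C K : Matrix (Fin n) (Fin n) ℂ) : ℝ :=
  sSup {y : ℝ | ∃ x : Fin n → ℂ, x ≠ 0 ∧ rfun M C K x = y}

/-- The phase-space matrix `A = [[0, K½ M⁻½], [−M⁻½ K½, −M⁻½ C M⁻½]]`. -/
def phaseA {n : ℕ} (M C K : Matrix (Fin n) (Fin n) ℂ) :
    Matrix (Fin n ⊕ Fin n) (Fin n ⊕ Fin n) ℂ :=
  fromBlocks 0 (msqrt K * (msqrt M)⁻¹)
    (-((msqrt M)⁻¹ * msqrt K)) (-((msqrt M)⁻¹ * C * (msqrt M)⁻¹))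

/-- The operator norm of a matrix with respect to the Euclidean norm. -/
def opNorm {m : Type*} [Fintype m] [DecidableEq m] (A : Matrix m m ℂ) : ℝ :=
  ‖toEuclideanCLM (𝕜 := ℂ) A‖

/-- The block matrix `L(μ) = [[K½ K(μ)⁻½, 0], [μ M½ K(μ)⁻½, I]]`. -/
def Lmat {n : ℕ} (M C K : Matrix (Fin n) (Fin n) ℂ) (mu : ℝ) :
    Matrix (Fin n ⊕ Fin n) (Fin n ⊕ Fin n) ℂ :=
  fromBlocks (msqrt K * (msqrt (Kpen M C K (mu : ℂ)))⁻¹) 0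
    ((mu : ℂ) • (msqrt M * (msqrt (Kpen M C K (mu : ℂ)))⁻¹)) 1

/-! For `μ > γ` each scalar pencil `m(x) λ² + c(x) λ + k(x)` is positive at `λ = μ` and has positive
derivative `2 μ m(x) + c(x)` there, so `K(μ)` and `C + 2μM` are positive definite. With
`S = M^½`, `R = K^½`, `T = K(μ)^½`, the identity `T² = μ² S² + μ C + R²` gives `A L(μ) = L(μ) B`
for `B = [[μ, T S⁻¹], [-S⁻¹ T, -μ - S⁻¹ C S⁻¹]]`. The off-diagonal blocks of `B` are skew-adjoint
and `S⁻¹ (C + 2μM) S⁻¹ ≥ 0`, so `Re ⟪x, B x⟫ ≤ μ ‖x‖²`; then `e^{-2μt} ‖e^{tB} v‖²` is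
nonincreasing, `‖e^{tB}‖ ≤ e^{μt}`, and `e^{tA} = L(μ) e^{tB} L(μ)⁻¹`. -/

open scoped InnerProductSpace

section Dissipative

variable {E : Type*} [NormedAddCommGroup E] [InnerProductSpace ℂ E]

theorem norm_le_exp_mul_norm_of_re_inner_le {f : E → E} {u : ℝ → E} {μ : ℝ}
    (hu : ∀ s, HasDerivAt u (f (u s)) s) (hf : ∀ v, (⟪v, f v⟫_ℂ).re ≤ μ * ‖v‖ ^ 2)
    {t : ℝ} (ht : 0 ≤ t) : ‖u t‖ ≤ Real.exp (μ * t) * ‖u 0‖ := by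
  have hnorm : ∀ s, HasDerivAt (fun s => ‖u s‖ ^ 2) (2 * (⟪u s, f (u s)⟫_ℂ).re) s := by
    intro s
    have := Complex.reCLM.hasFDerivAt.comp_hasDerivAt s ((hu s).inner ℂ (hu s))
    have hsymm : (⟪f (u s), u s⟫_ℂ).re = (⟪u s, f (u s)⟫_ℂ).re := inner_re_symm (𝕜 := ℂ) _ _
    have hsq : ∀ x : E, (⟪x, x⟫_ℂ).re = ‖x‖ ^ 2 := inner_self_eq_norm_sq (𝕜 := ℂ)
    simpa only [Function.comp_def, Complex.reCLM_apply, Complex.add_re, hsq, hsymm, two_mul]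
      using this
  have hg : ∀ s, HasDerivAt (fun s => ‖u s‖ ^ 2 * Real.exp (-(2 * μ) * s))
      ((2 * (⟪u s, f (u s)⟫_ℂ).re - 2 * μ * ‖u s‖ ^ 2) * Real.exp (-(2 * μ) * s)) s := by
    intro s
    refine ((hnorm s).mul ((hasDerivAt_id' s).const_mul (-(2 * μ))).exp).congr_deriv ?_
    ring
  have hanti : Antitone (fun s => ‖u s‖ ^ 2 * Real.exp (-(2 * μ) * s)) := by
    refine antitone_of_deriv_nonpos (fun s => (hg s).differentiableAt) fun s => ?_
    rw [(hg s).deriv]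
    exact mul_nonpos_of_nonpos_of_nonneg (by linarith [hf (u s)]) (Real.exp_nonneg _)
  have hsq : ‖u t‖ ^ 2 ≤ (Real.exp (μ * t) * ‖u 0‖) ^ 2 :=
    calc ‖u t‖ ^ 2 = ‖u t‖ ^ 2 * Real.exp (-(2 * μ) * t) * Real.exp (μ * t) ^ 2 := by
          rw [mul_assoc, ← Real.exp_nat_mul, ← Real.exp_add, Nat.cast_ofNat,
            show -(2 * μ) * t + 2 * (μ * t) = 0 by ring, Real.exp_zero, mul_one]
      _ ≤ ‖u 0‖ ^ 2 * Real.exp (μ * t) ^ 2 := by gcongr; simpa using hanti ht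
      _ = (Real.exp (μ * t) * ‖u 0‖) ^ 2 := by ring
  exact (pow_le_pow_iff_left₀ (norm_nonneg _) (by positivity) two_ne_zero).1 hsq

theorem norm_exp_smul_le_of_re_inner_le [CompleteSpace E] {B : E →L[ℂ] E} {μ : ℝ}
    (hB : ∀ v, (⟪v, B v⟫_ℂ).re ≤ μ * ‖v‖ ^ 2) {t : ℝ} (ht : 0 ≤ t) :
    ‖NormedSpace.exp ((t : ℂ) • B)‖ ≤ Real.exp (μ * t) := by
  refine ContinuousLinearMap.opNorm_le_bound _ (Real.exp_nonneg _) fun v => ?_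
  have hu : ∀ s : ℝ, HasDerivAt (fun s : ℝ => NormedSpace.exp ((s : ℂ) • B) v)
      (B (NormedSpace.exp ((s : ℂ) • B) v)) s := by
    intro s
    have h : HasDerivAt (fun s : ℝ => NormedSpace.exp ((s : ℂ) • B))
        (B * NormedSpace.exp ((s : ℂ) • B)) s := by
      simpa using! (hasDerivAt_exp_smul_const' B (s : ℂ)).scomp s Complex.ofRealCLM.hasDerivAt
    exact ((ContinuousLinearMap.apply ℂ E v).hasFDerivAt.restrictScalars ℝ).comp_hasDerivAt s h
  simpa using norm_le_exp_mul_norm_of_re_inner_le hu hB ht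

end Dissipative

section OperatorNorm

variable {m : Type*} [Fintype m] [DecidableEq m]

theorem opNorm_nonneg (A : Matrix m m ℂ) : 0 ≤ opNorm A := norm_nonneg _

theorem opNorm_mul_le (A B : Matrix m m ℂ) : opNorm (A * B) ≤ opNorm A * opNorm B := by
  simpa only [opNorm, map_mul] using
    norm_mul_le (toEuclideanCLM (𝕜 := ℂ) A) (toEuclideanCLM (𝕜 := ℂ) B)

open scoped Matrix.Norms.L2Operator in
theorem toEuclideanCLM_exp (A : Matrix m m ℂ) :
    toEuclideanCLM (𝕜 := ℂ) (NormedSpace.exp A) = NormedSpace.exp (toEuclideanCLM (𝕜 := ℂ) A) :=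
  NormedSpace.map_exp_of_mem_ball (𝕂 := ℂ) (toEuclideanCLM (𝕜 := ℂ) (n := m))
    (LinearMap.continuous_of_finiteDimensional
      (toEuclideanCLM (𝕜 := ℂ) (n := m)).toAlgEquiv.toLinearMap) A
    ((NormedSpace.expSeries_radius_eq_top ℂ (Matrix m m ℂ)).symm ▸ edist_lt_top _ _)

theorem opNorm_exp_smul_le_of_re_dotProduct_le {B : Matrix m m ℂ} {μ : ℝ}
    (hB : ∀ x : m → ℂ, (star x ⬝ᵥ B *ᵥ x).re ≤ μ * (star x ⬝ᵥ x).re) {t : ℝ} (ht : 0 ≤ t) :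
    opNorm (NormedSpace.exp ((t : ℂ) • B)) ≤ Real.exp (μ * t) := by
  rw [opNorm, toEuclideanCLM_exp, map_smul]
  refine norm_exp_smul_le_of_re_inner_le (fun v => ?_) ht
  rw [← inner_self_eq_norm_sq (𝕜 := ℂ), EuclideanSpace.inner_eq_star_dotProduct,
    EuclideanSpace.inner_eq_star_dotProduct, ofLp_toEuclideanCLM, dotProduct_comm,
    dotProduct_comm v.ofLp]
  exact hB v.ofLp

end OperatorNorm

section BlockSimilarity

variable {m α : Type*} [Fintype m] [DecidableEq m] [CommRing α]

theorem fromBlocks_mul_fromBlocks_eq_of_sq_eq {S R T C : Matrix m m α} (μ : α) (hS : IsUnit S.det)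
    (hT : IsUnit T.det) (hTT : T * T = μ ^ 2 • (S * S) + μ • C + R * R) :
    fromBlocks 0 (R * S⁻¹) (-(S⁻¹ * R)) (-(S⁻¹ * C * S⁻¹)) *
        fromBlocks (R * T⁻¹) 0 (μ • (S * T⁻¹)) 1 =
      fromBlocks (R * T⁻¹) 0 (μ • (S * T⁻¹)) 1 *
        fromBlocks (μ • 1) (T * S⁻¹) (-(S⁻¹ * T)) (-(μ • 1) - S⁻¹ * C * S⁻¹) := by
  have cS : ∀ X : Matrix m m α, S⁻¹ * (S * X) = X := fun X => by
    rw [← Matrix.mul_assoc, nonsing_inv_mul _ hS, Matrix.one_mul]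
  have cT : ∀ X : Matrix m m α, T⁻¹ * (T * X) = X := fun X => by
    rw [← Matrix.mul_assoc, nonsing_inv_mul _ hT, Matrix.one_mul]
  have hST : S⁻¹ * T = μ ^ 2 • (S * T⁻¹) + μ • (S⁻¹ * (C * T⁻¹)) + S⁻¹ * (R * (R * T⁻¹)) := by
    rw [show S⁻¹ * T = S⁻¹ * (T * T * T⁻¹) by
      rw [Matrix.mul_assoc T, mul_nonsing_inv _ hT, Matrix.mul_one], hTT]
    simp only [Matrix.add_mul, Matrix.mul_add, Matrix.smul_mul, Matrix.mul_smul,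
      Matrix.mul_assoc, cS]
  rw [fromBlocks_multiply, fromBlocks_multiply]
  congr 1
  · simp only [Matrix.zero_mul, zero_add, add_zero, Matrix.mul_smul, Matrix.mul_one,
      Matrix.mul_assoc, cS]
  · simp only [Matrix.zero_mul, zero_add, add_zero, Matrix.mul_one, Matrix.mul_assoc, cT]
  · simp only [Matrix.neg_mul, Matrix.mul_neg, Matrix.one_mul, Matrix.mul_one,
      Matrix.mul_smul, smul_smul, Matrix.mul_assoc, cS, hST]
    module
  · simp only [Matrix.mul_zero, Matrix.mul_one, Matrix.one_mul, zero_add, Matrix.smul_mul,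
      Matrix.mul_assoc, cT]
    rw [mul_nonsing_inv _ hS]
    module

end BlockSimilarity

section BlockMatrix

variable {m p : Type*} [Fintype m] [Fintype p] [DecidableEq m] [DecidableEq p]

theorem re_dotProduct_fromBlocks_mulVec_le (W : Matrix m p ℂ) {D : Matrix p p ℂ} {μ : ℝ}
    (hD : (D + ((2 * μ : ℝ) : ℂ) • 1).PosSemidef) (x : m ⊕ p → ℂ) :
    (star x ⬝ᵥ fromBlocks ((μ : ℂ) • 1) W (-Wᴴ) (-((μ : ℂ) • 1) - D) *ᵥ x).re ≤
      μ * (star x ⬝ᵥ x).re := by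
  obtain ⟨x₁, x₂, rfl⟩ : ∃ x₁ x₂, x = Sum.elim x₁ x₂ :=
    ⟨x ∘ Sum.inl, x ∘ Sum.inr, (Sum.elim_comp_inl_inr x).symm⟩
  have hskew : (star x₂ ⬝ᵥ Wᴴ *ᵥ x₁).re = (star x₁ ⬝ᵥ W *ᵥ x₂).re := by
    rw [star_dotProduct, star_mulVec, conjTranspose_conjTranspose, ← dotProduct_mulVec,
      Complex.star_def, Complex.conj_re]
  have hD' := hD.re_dotProduct_nonneg x₂
  simp only [RCLike.re_to_complex, add_mulVec, smul_mulVec, one_mulVec, dotProduct_add,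
    dotProduct_smul, smul_eq_mul, Complex.add_re, Complex.re_ofReal_mul] at hD'
  simp only [Function.star_sumElim, fromBlocks_mulVec, sumElim_dotProduct_sumElim,
    Sum.elim_comp_inl, Sum.elim_comp_inr, sub_mulVec, neg_mulVec, smul_mulVec, one_mulVec,
    dotProduct_add, dotProduct_sub, dotProduct_neg, dotProduct_smul, smul_eq_mul, Complex.add_re,
    Complex.sub_re, Complex.neg_re, Complex.re_ofReal_mul, hskew]
  linarith

end BlockMatrix

section SquareRoot

variable {n : ℕ} {P : Matrix (Fin n) (Fin n) ℂ}

theorem msqrt_eq_cfc (hP : P.PosSemidef) : msqrt P = cfc Real.sqrt P := by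
  rw [hP.1.cfc_eq, msqrt, dif_pos hP, IsHermitian.cfc, Unitary.conjStarAlgAut_apply]
  rfl

open scoped MatrixOrder in
theorem msqrt_mul_self (hP : P.PosSemidef) : msqrt P * msqrt P = P := by
  rw [msqrt_eq_cfc hP, ← cfcₙ_eq_cfc, ← CFC.sqrt_eq_real_sqrt P hP.nonneg,
    CFC.sqrt_mul_sqrt_self P hP.nonneg]

theorem isHermitian_msqrt (hP : P.PosSemidef) : (msqrt P).IsHermitian := by
  rw [msqrt_eq_cfc hP]
  exact cfc_predicate _ _

theorem isUnit_det_msqrt (hP : P.PosDef) : IsUnit (msqrt P).det := by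
  refine isUnit_of_mul_isUnit_left (y := (msqrt P).det) ?_
  rw [← det_mul, msqrt_mul_self hP.posSemidef]
  exact hP.det_pos.ne'.isUnit

end SquareRoot

section QuadraticForm

variable {n : ℕ}

theorem qf_add (P Q : Matrix (Fin n) (Fin n) ℂ) (x : Fin n → ℂ) :
    qf (P + Q) x = qf P x + qf Q x := by
  simp only [qf, add_mulVec, dotProduct_add, Complex.add_re]

theorem qf_ofReal_smul (a : ℝ) (P : Matrix (Fin n) (Fin n) ℂ) (x : Fin n → ℂ) :
    qf ((a : ℂ) • P) x = a * qf P x := by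
  simp only [qf, smul_mulVec, dotProduct_smul, smul_eq_mul, Complex.re_ofReal_mul]

theorem posDef_of_qf_pos {P : Matrix (Fin n) (Fin n) ℂ} (hP : P.IsHermitian)
    (h : ∀ x, x ≠ 0 → 0 < qf P x) : P.PosDef :=
  .of_dotProduct_mulVec_pos hP fun x hx =>
    RCLike.pos_iff.2 ⟨h x hx, hP.im_star_dotProduct_mulVec_self x⟩

theorem qf_pos_of_posDef {P : Matrix (Fin n) (Fin n) ℂ} (hP : P.PosDef) {x : Fin n → ℂ}
    (hx : x ≠ 0) : 0 < qf P x :=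
  hP.re_dotProduct_pos hx

end QuadraticForm

section RootBound

variable {n : ℕ} {M C K : Matrix (Fin n) (Fin n) ℂ} {x : Fin n → ℂ} {μ : ℝ}

theorem rfun_nonpos (hm : 0 < qf M x) (hc : 0 < qf C x) (hk : 0 < qf K x) :
    rfun M C K x ≤ 0 := by
  unfold rfun
  split_ifs with hD
  · refine div_nonpos_of_nonpos_of_nonneg ?_ (by positivity)
    have : √(qf C x ^ 2 - 4 * qf M x * qf K x) ≤ qf C x :=
      Real.sqrt_le_iff.2 ⟨hc.le, by nlinarith [mul_pos hm hk]⟩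
    linarith
  · exact div_nonpos_of_nonpos_of_nonneg (by linarith) (by positivity)

theorem pencil_pos_of_rfun_lt (hm : 0 < qf M x) (h : rfun M C K x < μ) :
    0 < μ ^ 2 * qf M x + μ * qf C x + qf K x := by
  unfold rfun at h
  split_ifs at h with hD
  · set d := qf C x ^ 2 - 4 * qf M x * qf K x
    have hlt : -qf C x + √d < μ * (2 * qf M x) := (div_lt_iff₀ (by positivity)).1 h
    have hsq : √d ^ 2 = d := Real.sq_sqrt (by linarith)
    nlinarith [Real.sqrt_nonneg d, sq_nonneg (√d - (2 * qf M x * μ + qf C x))]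
  · nlinarith [sq_nonneg (2 * qf M x * μ + qf C x)]

theorem pencil_deriv_pos_of_rfun_lt (hm : 0 < qf M x) (h : rfun M C K x < μ) :
    0 < 2 * μ * qf M x + qf C x := by
  have : -qf C x / (2 * qf M x) < μ := by
    refine lt_of_le_of_lt ?_ h
    unfold rfun
    split_ifs
    · gcongr
      linarith [Real.sqrt_nonneg (qf C x ^ 2 - 4 * qf M x * qf K x)]
    · rfl
  linarith [(div_lt_iff₀ (by positivity : (0 : ℝ) < 2 * qf M x)).1 this]

end RootBound

section Pencil

variable {n : ℕ} {M C K : Matrix (Fin n) (Fin n) ℂ} {mu : ℝ}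

theorem rfun_lt_of_gam_lt (hM : M.PosDef) (hC : C.PosDef) (hK : K.PosDef) (h : gam M C K < mu)
    {x : Fin n → ℂ} (hx : x ≠ 0) : rfun M C K x < mu := by
  have hbdd : BddAbove {y : ℝ | ∃ x : Fin n → ℂ, x ≠ 0 ∧ rfun M C K x = y} := by
    refine ⟨0, ?_⟩
    rintro _ ⟨x, hx, rfl⟩
    exact rfun_nonpos (qf_pos_of_posDef hM hx) (qf_pos_of_posDef hC hx) (qf_pos_of_posDef hK hx)
  exact (le_csSup hbdd ⟨x, hx, rfl⟩).trans_lt h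

theorem posDef_Kpen_of_gam_lt (hM : M.PosDef) (hC : C.PosDef) (hK : K.PosDef)
    (h : gam M C K < mu) : (Kpen M C K mu).PosDef := by
  have hKpen : Kpen M C K mu = ((mu ^ 2 : ℝ) : ℂ) • M + (mu : ℂ) • C + K := by
    rw [Kpen, Complex.ofReal_pow]
  rw [hKpen]
  refine posDef_of_qf_pos
    (((hM.1.smul (Complex.conj_ofReal _)).add (hC.1.smul (Complex.conj_ofReal _))).add hK.1)
    fun x hx => ?_
  rw [qf_add, qf_add, qf_ofReal_smul, qf_ofReal_smul]
  exact pencil_pos_of_rfun_lt (qf_pos_of_posDef hM hx) (rfun_lt_of_gam_lt hM hC hK h hx)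

theorem posDef_add_smul_of_gam_lt (hM : M.PosDef) (hC : C.PosDef) (hK : K.PosDef)
    (h : gam M C K < mu) : (C + ((2 * mu : ℝ) : ℂ) • M).PosDef := by
  refine posDef_of_qf_pos (hC.1.add (hM.1.smul (Complex.conj_ofReal _))) fun x hx => ?_
  rw [qf_add, qf_ofReal_smul]
  linarith [pencil_deriv_pos_of_rfun_lt (qf_pos_of_posDef hM hx)
    (rfun_lt_of_gam_lt hM hC hK h hx)]

end Pencil

def Bmat {n : ℕ} (M C K : Matrix (Fin n) (Fin n) ℂ) (mu : ℝ) :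
    Matrix (Fin n ⊕ Fin n) (Fin n ⊕ Fin n) ℂ :=
  fromBlocks ((mu : ℂ) • 1) (msqrt (Kpen M C K mu) * (msqrt M)⁻¹)
    (-((msqrt M)⁻¹ * msqrt (Kpen M C K mu))) (-((mu : ℂ) • 1) - (msqrt M)⁻¹ * C * (msqrt M)⁻¹)

section Similarity

variable {n : ℕ} {M C K : Matrix (Fin n) (Fin n) ℂ} {mu : ℝ}

theorem phaseA_mul_Lmat (hM : M.PosDef) (hK : K.PosDef) (hQ : (Kpen M C K mu).PosDef) :
    phaseA M C K * Lmat M C K mu = Lmat M C K mu * Bmat M C K mu := by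
  refine fromBlocks_mul_fromBlocks_eq_of_sq_eq (mu : ℂ) (isUnit_det_msqrt hM)
    (isUnit_det_msqrt hQ) ?_
  rw [msqrt_mul_self hM.posSemidef, msqrt_mul_self hK.posSemidef,
    msqrt_mul_self hQ.posSemidef, Kpen]

theorem isUnit_Lmat (hK : K.PosDef) (hQ : (Kpen M C K mu).PosDef) : IsUnit (Lmat M C K mu) := by
  refine isUnit_fromBlocks_zero₁₂.2 ⟨?_, isUnit_one⟩
  rw [isUnit_iff_isUnit_det, det_mul]
  exact (isUnit_det_msqrt hK).mul (isUnit_nonsing_inv_det _ (isUnit_det_msqrt hQ))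

theorem re_dotProduct_Bmat_mulVec_le (hM : M.PosDef) (hQ : (Kpen M C K mu).PosDef)
    (hCM : (C + ((2 * mu : ℝ) : ℂ) • M).PosDef) (x : Fin n ⊕ Fin n → ℂ) :
    (star x ⬝ᵥ Bmat M C K mu *ᵥ x).re ≤ mu * (star x ⬝ᵥ x).re := by
  set S := msqrt M
  have hS : S⁻¹ᴴ = S⁻¹ := by
    rw [conjTranspose_nonsing_inv, (isHermitian_msqrt hM.posSemidef).eq]
  have hW : (msqrt (Kpen M C K mu) * S⁻¹)ᴴ = S⁻¹ * msqrt (Kpen M C K mu) := by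
    rw [conjTranspose_mul, hS, (isHermitian_msqrt hQ.posSemidef).eq]
  have hD : (S⁻¹ * C * S⁻¹ + ((2 * mu : ℝ) : ℂ) • 1).PosSemidef := by
    have hSS : S⁻¹ * M * S⁻¹ = 1 := by
      rw [← msqrt_mul_self hM.posSemidef, ← Matrix.mul_assoc,
        nonsing_inv_mul _ (isUnit_det_msqrt hM), Matrix.one_mul,
        mul_nonsing_inv _ (isUnit_det_msqrt hM)]
    convert hCM.posSemidef.conjTranspose_mul_mul_same S⁻¹ using 1
    rw [hS, Matrix.mul_add, Matrix.add_mul, Matrix.mul_smul, Matrix.smul_mul, hSS]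
  rw [Bmat, ← hW]
  exact re_dotProduct_fromBlocks_mulVec_le _ hD x

end Similarity

theorem decay_estimate_general {n : ℕ}
    (M C K : Matrix (Fin n) (Fin n) ℂ)
    (hM : M.PosDef) (hC : C.PosDef) (hK : K.PosDef) :
    ∀ mu : ℝ, gam M C K < mu → mu ≤ 0 → ∀ t : ℝ, 0 ≤ t →
      opNorm (NormedSpace.exp ((t : ℂ) • phaseA M C K)) ≤
        opNorm (Lmat M C K mu) * opNorm ((Lmat M C K mu)⁻¹) * Real.exp (mu * t) := by
  intro mu hgam _ t ht
  have hQ := posDef_Kpen_of_gam_lt hM hC hK hgam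
  set L := Lmat M C K mu
  have hL : IsUnit L := isUnit_Lmat hK hQ
  have hA : phaseA M C K = L * Bmat M C K mu * L⁻¹ := by
    rw [← phaseA_mul_Lmat hM hK hQ]
    exact (mul_nonsing_inv_cancel_right _ _ ((isUnit_iff_isUnit_det _).1 hL)).symm
  have hexp : NormedSpace.exp ((t : ℂ) • phaseA M C K) =
      L * NormedSpace.exp ((t : ℂ) • Bmat M C K mu) * L⁻¹ := by
    rw [hA, ← Matrix.smul_mul, ← Matrix.mul_smul, Matrix.exp_conj _ _ hL]
  have hB : opNorm (NormedSpace.exp ((t : ℂ) • Bmat M C K mu)) ≤ Real.exp (mu * t) :=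
    opNorm_exp_smul_le_of_re_dotProduct_le
      (re_dotProduct_Bmat_mulVec_le hM hQ (posDef_add_smul_of_gam_lt hM hC hK hgam)) ht
  calc opNorm (NormedSpace.exp ((t : ℂ) • phaseA M C K))
      ≤ opNorm L * opNorm (NormedSpace.exp ((t : ℂ) • Bmat M C K mu)) * opNorm L⁻¹ := by
        rw [hexp]
        refine (opNorm_mul_le _ _).trans ?_
        gcongr
        · exact opNorm_nonneg _
        · exact opNorm_mul_le _ _
    _ ≤ opNorm L * Real.exp (mu * t) * opNorm L⁻¹ := by
        gcongr
        · exact opNorm_nonneg _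
        · exact opNorm_nonneg _
    _ = opNorm L * opNorm L⁻¹ * Real.exp (mu * t) := by ring

/-- The decay estimate `‖exp(tA)‖ ≤ ‖L(μ)‖ ‖L(μ)⁻¹‖ e^{μt}` for `γ < μ ≤ 0`
and `t ≥ 0`. -/
theorem decay_estimate {n : ℕ} (hn : 1 ≤ n)
    (M C K : Matrix (Fin n) (Fin n) ℂ)
    (hM : M.PosDef) (hC : C.PosDef) (hK : K.PosDef) :
    ∀ mu : ℝ, gam M C K < mu → mu ≤ 0 → ∀ t : ℝ, 0 ≤ t →
      opNorm (NormedSpace.exp ((t : ℂ) • phaseA M C K)) ≤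
        opNorm (Lmat M C K mu) * opNorm ((Lmat M C K mu)⁻¹) * Real.exp (mu * t) :=
  decay_estimate_general M C K hM hC hK

end
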